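/- Let p be a prime and k, n, m positive integers with p | k and m = 2k − k/p. If f ∈ F_p[x_1, ..., x_n] is homogeneous of degree kp − 1 and all Hasse derivatives of f of weight < m vanish at every point of a line L in direction b ≠ 0, then all Hasse derivatives of f of weight < k vanish at b. -/

import Mathlib

open MvPolynomial

/-- The shift of `f` by `a`: the polynomial `z ↦ f(z + a)`. Its coefficients are
exactly the Hasse derivatives of `f` evaluated at `a`. -/
noncomputable def polyShift {F : Type*} [CommRing F] {n : ℕ}
    (f : MvPolynomial (Fin n) F) (a : Fin n → F) : MvPolynomial (Fin n) F :=
  MvPolynomial.bind₁ (fun i => MvPolynomial.X i + MvPolynomial.C (a i)) f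

/-- All Hasse derivatives of `f` of weight `< m` vanish at `a`. -/
def HasseVanish {F : Type*} [CommRing F] {n : ℕ}
    (f : MvPolynomial (Fin n) F) (a : Fin n → F) (m : ℕ) : Prop :=
  ∀ d : Fin n →₀ ℕ, (d.sum fun _ e => e) < m →
    MvPolynomial.coeff d (polyShift f a) = 0

/-!
Fix `d` of weight `w < k` and put `g(T) = f^{(d)}(a + T b)`. The coefficient of `T^j` in
`f^{(d)}(x + T b)` is the `d`-th Hasse derivative at `b` of the degree-`(w + j)` component
of `z ↦ f(z + x)`. Taking `x = a + t b` shows that `g` vanishes to order `m - w` at every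
`t ∈ 𝔽_p`; taking `x = a` and using that `f` is homogeneous of degree `D = kp - 1` shows that
`g` has degree at most `D - w` with coefficient `f^{(d)}(b)` at `T^{D - w}`.
As `D - w < p (m - w)`, `g = 0`, and in particular `f^{(d)}(b) = 0`.
-/

theorem coeff_prod_aeval_X {R σ : Type*} [CommSemiring R] [Fintype σ] [DecidableEq σ]
    (q : σ → Polynomial R) (d : σ →₀ ℕ) :
    coeff d (∏ i, Polynomial.aeval (X i : MvPolynomial σ R) (q i)) =
      ∏ i, (q i).coeff (d i) := by
  have expand : ∀ i, Polynomial.aeval (X i : MvPolynomial σ R) (q i) =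
      ∑ k ∈ (q i).support, monomial (Finsupp.single i k) ((q i).coeff k) := by
    intro i
    conv_lhs => rw [(q i).as_sum_support]
    simp [Polynomial.aeval_monomial, X_pow_eq_monomial, C_mul_monomial]
  simp_rw [expand, Finset.prod_univ_sum, ← monomial_sum_prod, coeff_sum, coeff_monomial,
    ← Finsupp.equivFunOnFinite_symm_eq_sum, Equiv.symm_apply_eq]
  rw [Finset.sum_ite_eq']
  split_ifs with hd
  · rfl
  · obtain ⟨i, hi⟩ : ∃ i, d i ∉ (q i).support := by simpa [Fintype.mem_piFinset] using hd
    exact (Finset.prod_eq_zero (Finset.mem_univ i) (Polynomial.notMem_support_iff.mp hi)).symm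

section
variable {R S : Type*} [CommRing R] [CommRing S] {n : ℕ}

theorem coeff_polyShift_monomial (u d : Fin n →₀ ℕ) (r : R) (x : Fin n → R) :
    coeff d (polyShift (monomial u r) x) = r * ∏ i, x i ^ (u i - d i) * (u i).choose (d i) := by
  have hprod : ∏ i ∈ u.support, (X i + C (x i)) ^ u i =
      ∏ i, Polynomial.aeval (X i : MvPolynomial (Fin n) R)
        ((Polynomial.X + Polynomial.C (x i)) ^ u i) := by
    simp only [map_pow, map_add, Polynomial.aeval_X, Polynomial.aeval_C, algebraMap_eq]
    exact Finset.prod_subset (Finset.subset_univ _) fun i _ hi => by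
      rw [Finsupp.notMem_support_iff.mp hi, pow_zero]
  simp_rw [polyShift, bind₁_monomial, hprod, coeff_C_mul, coeff_prod_aeval_X,
    Polynomial.coeff_X_add_C_pow]

theorem polyShift_polyShift (f : MvPolynomial (Fin n) R) (x y : Fin n → R) :
    polyShift (polyShift f x) y = polyShift f (x + y) := by
  simp only [polyShift, bind₁_bind₁, map_add, bind₁_X_right, bind₁_C_right, Pi.add_apply,
    add_assoc, add_comm (C (y _))]

theorem map_polyShift (φ : R →+* S) (f : MvPolynomial (Fin n) R) (x : Fin n → R) :
    map φ (polyShift f x) = polyShift (map φ f) (φ ∘ x) := by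
  simp [polyShift, map_bind₁]

theorem coeff_polyShift (f : MvPolynomial (Fin n) R) (x : Fin n → R) (d : Fin n →₀ ℕ) :
    coeff d (polyShift f x) =
      ∑ v ∈ f.support, coeff v f * ∏ i, x i ^ (v i - d i) * (v i).choose (d i) := by
  conv_lhs => rw [f.as_sum]
  rw [polyShift, map_sum, coeff_sum]
  exact Finset.sum_congr rfl fun v _ => coeff_polyShift_monomial v d _ x

theorem homogeneousComponent_polyShift_of_le {f : MvPolynomial (Fin n) R} {D : ℕ}
    (hf : f.IsHomogeneous D) (x : Fin n → R) {e : ℕ} (he : D ≤ e) :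
    homogeneousComponent e (polyShift f x) = homogeneousComponent e f := by
  ext u
  simp only [coeff_homogeneousComponent]
  split_ifs with hu
  swap
  · rfl
  rw [coeff_polyShift, Finset.sum_eq_single u]
  · simp
  · intro v hv hvu
    by_cases huv : u ≤ v
    · have hsplit : v.degree = u.degree + (v - u).degree := by
        rw [← map_add, add_tsub_cancel_of_le huv]
      have hpos : (v - u).degree ≠ 0 := by
        rw [Ne, Finsupp.degree_eq_zero_iff, tsub_eq_zero_iff_le]
        exact fun hvu' => hvu (le_antisymm hvu' huv)
      rw [hf.coeff_eq_zero (by omega), zero_mul]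
    · obtain ⟨i, hi⟩ : ∃ i, v i < u i := by simpa [Finsupp.le_def] using huv
      rw [Finset.prod_eq_zero (Finset.mem_univ i) (by simp [Nat.choose_eq_zero_of_lt hi]),
        mul_zero]
  · intro hu
    rw [notMem_support_iff.mp hu, zero_mul]

/-- `T ↦ f^{(d)}(x + T • b)`. -/
noncomputable def hasseOnLine (f : MvPolynomial (Fin n) R) (d : Fin n →₀ ℕ)
    (x b : Fin n → R) : Polynomial R :=
  coeff d (polyShift (map Polynomial.C f)
    fun i => Polynomial.C (x i) + Polynomial.C (b i) * Polynomial.X)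

theorem hasseOnLine_polyShift (f : MvPolynomial (Fin n) R) (d : Fin n →₀ ℕ)
    (x y b : Fin n → R) :
    hasseOnLine (polyShift f x) d y b = hasseOnLine f d (x + y) b := by
  simp only [hasseOnLine, map_polyShift, polyShift_polyShift]
  congr! 3 with i
  simp [add_assoc]

theorem taylor_hasseOnLine (f : MvPolynomial (Fin n) R) (d : Fin n →₀ ℕ) (x b : Fin n → R)
    (t : R) : Polynomial.taylor t (hasseOnLine f d x b) = hasseOnLine f d (x + t • b) b := by
  set φ : Polynomial R →+* Polynomial R := (Polynomial.taylorAlgHom t).toRingHom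
  have hC : φ.comp Polynomial.C = Polynomial.C := RingHom.ext (Polynomial.taylor_C t)
  change φ _ = _
  rw [hasseOnLine, ← coeff_map, map_polyShift, map_map, hC, hasseOnLine]
  congr 2
  funext i
  simp [φ, Polynomial.taylor_X]
  ring

theorem coeff_hasseOnLine_zero (P : MvPolynomial (Fin n) R) (d : Fin n →₀ ℕ) (b : Fin n → R)
    (j : ℕ) : (hasseOnLine P d 0 b).coeff j =
      coeff d (polyShift (homogeneousComponent (d.degree + j) P) b) := by
  induction P using MvPolynomial.induction_on' with
  | monomial u r =>
    set c := ∏ i, b i ^ (u i - d i) * (u i).choose (d i)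
    have hline : hasseOnLine (monomial u r) d 0 b =
        Polynomial.C (r * c) * Polynomial.X ^ (u - d).degree := by
      simp only [hasseOnLine, map_monomial, coeff_polyShift_monomial, Pi.zero_apply, map_zero,
        zero_add, mul_pow, Finset.prod_mul_distrib, Finset.prod_pow_eq_pow_sum,
        Finsupp.degree_eq_sum, Finsupp.tsub_apply, c, map_mul, map_prod, map_pow, map_natCast]
      ring
    rw [hline, Polynomial.coeff_C_mul_X_pow, homogeneousComponent_of_mem
      (isHomogeneous_monomial r rfl), apply_ite (fun P => coeff d (polyShift P b)),
      coeff_polyShift_monomial]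
    change _ = ite _ (r * c) _
    rw [show coeff d (polyShift (0 : MvPolynomial (Fin n) R) b) = 0 by simp [polyShift]]
    by_cases hdu : d ≤ u
    · have hdeg : (u - d).degree + d.degree = u.degree := by
        rw [← map_add, tsub_add_cancel_of_le hdu]
      exact if_congr (by omega) rfl rfl
    · obtain ⟨i, hi⟩ : ∃ i, u i < d i := by simpa [Finsupp.le_def] using hdu
      have hc : c = 0 :=
        Finset.prod_eq_zero (Finset.mem_univ i) (by simp [Nat.choose_eq_zero_of_lt hi])
      simp [hc]
  | add P Q hP hQ =>
    simp only [hasseOnLine, polyShift, map_add, coeff_add, Polynomial.coeff_add] at hP hQ ⊢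
    rw [hP, hQ]

theorem coeff_hasseOnLine (f : MvPolynomial (Fin n) R) (d : Fin n →₀ ℕ) (x b : Fin n → R)
    (j : ℕ) : (hasseOnLine f d x b).coeff j =
      coeff d (polyShift (homogeneousComponent (d.degree + j) (polyShift f x)) b) := by
  rw [← coeff_hasseOnLine_zero, hasseOnLine_polyShift, add_zero]

theorem coeff_hasseOnLine_eq_zero {f : MvPolynomial (Fin n) R} {x : Fin n → R} {m : ℕ}
    (hf : HasseVanish f x m) (d : Fin n →₀ ℕ) (b : Fin n → R) {j : ℕ}
    (hj : d.degree + j < m) :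
    (hasseOnLine f d x b).coeff j = 0 := by
  rw [coeff_hasseOnLine, homogeneousComponent_eq_zero' _ _
    fun u hu hdeg => mem_support_iff.mp hu (hf u (show u.degree < m by omega))]
  simp [polyShift]

theorem natDegree_hasseOnLine_le {f : MvPolynomial (Fin n) R} {D : ℕ}
    (hf : f.IsHomogeneous D) (d : Fin n →₀ ℕ) (x b : Fin n → R) :
    (hasseOnLine f d x b).natDegree ≤ D - d.degree := by
  rw [Polynomial.natDegree_le_iff_coeff_eq_zero]
  intro j hj
  rw [coeff_hasseOnLine, homogeneousComponent_polyShift_of_le hf x (by omega),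
    homogeneousComponent_of_mem hf, if_neg (by omega)]
  simp [polyShift]

theorem coeff_hasseOnLine_of_isHomogeneous {f : MvPolynomial (Fin n) R} {D : ℕ}
    (hf : f.IsHomogeneous D) {d : Fin n →₀ ℕ} (hd : d.degree ≤ D) (x b : Fin n → R) :
    (hasseOnLine f d x b).coeff (D - d.degree) = coeff d (polyShift f b) := by
  rw [coeff_hasseOnLine, Nat.add_sub_cancel' hd,
    homogeneousComponent_polyShift_of_le hf x le_rfl, homogeneousComponent_eq_self hf]

end

theorem Polynomial.eq_zero_of_forall_X_sub_C_pow_dvd {K : Type*} [Field K] [Fintype K]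
    {g : Polynomial K} {r : ℕ} (hdvd : ∀ t, (X - C t) ^ r ∣ g)
    (hdeg : g.natDegree < Fintype.card K * r) : g = 0 := by
  by_contra hg
  have hprod : (∏ t : K, (X - C t) ^ r) ∣ g :=
    Fintype.prod_dvd_of_coprime
      (fun s t hst => (pairwise_coprime_X_sub_C Function.injective_id hst).pow) hdvd
  have := natDegree_le_of_dvd hprod hg
  rw [natDegree_prod _ _ fun t _ => pow_ne_zero _ (X_sub_C_ne_zero t)] at this
  simp only [natDegree_pow, natDegree_X_sub_C, mul_one, Finset.sum_const, Finset.card_univ,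
    smul_eq_mul] at this
  omega

theorem mul_sub_one_sub_lt_mul_two_mul_sub_div_sub {p k w : ℕ} (hp : 0 < p) (hw : w < k) :
    k * p - 1 - w < p * (2 * k - k / p - w) := by
  have hqp : k / p * p ≤ k := Nat.div_mul_le_self k p
  have hq : k / p ≤ k := Nat.div_le_self k p
  have hkp : k ≤ k * p := Nat.le_mul_of_pos_right k hp
  zify [show 1 ≤ k * p by omega, show w ≤ k * p - 1 by omega, show k / p ≤ 2 * k by omega,
    show w ≤ 2 * k - k / p by omega] at *
  nlinarith

theorem hasse_vanish_on_line_implies_at_direction_general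
    {p : ℕ} [Fact p.Prime] {k m n : ℕ}
    (hm : m = 2 * k - k / p)
    (f : MvPolynomial (Fin n) (ZMod p)) (hf : f.IsHomogeneous (k * p - 1))
    (a b : Fin n → ZMod p)
    (hline : ∀ t : ZMod p, HasseVanish f (a + t • b) m) :
    HasseVanish f b k := by
  intro d (hd : d.degree < k)
  have hp : 0 < p := (Fact.out : p.Prime).pos
  have hdD : d.degree ≤ k * p - 1 := by
    have := Nat.le_mul_of_pos_right k hp
    omega
  have hdeg : k * p - 1 - d.degree < p * (m - d.degree) :=
    hm ▸ mul_sub_one_sub_lt_mul_two_mul_sub_div_sub hp hd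
  have hroot : ∀ t, (Polynomial.X - Polynomial.C t) ^ (m - d.degree) ∣ hasseOnLine f d a b := by
    intro t
    rw [Polynomial.X_sub_C_pow_dvd_iff, ← Polynomial.taylor_apply, taylor_hasseOnLine,
      Polynomial.X_pow_dvd_iff]
    intro j hj
    exact coeff_hasseOnLine_eq_zero (hline t) d b (by omega)
  have hzero := Polynomial.eq_zero_of_forall_X_sub_C_pow_dvd hroot
    (by rw [ZMod.card]; exact (natDegree_hasseOnLine_le hf d a b).trans_lt hdeg)
  rw [← coeff_hasseOnLine_of_isHomogeneous hf hdD a b, hzero, Polynomial.coeff_zero]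

/-- Let `p` be prime, `p ∣ k`, `m = 2k - k/p`. If `f` is homogeneous of
degree `kp - 1` and all Hasse derivatives of `f` of weight `< m` vanish on a line `L`
in direction `b ≠ 0`, then all Hasse derivatives of `f` of weight `< k` vanish at `b`. -/
theorem hasse_vanish_on_line_implies_at_direction
    {p : ℕ} [Fact p.Prime] {k m n : ℕ} (hk : 0 < k) (hpk : p ∣ k) (hn : 0 < n)
    (hm : m = 2 * k - k / p)
    (f : MvPolynomial (Fin n) (ZMod p)) (hf : f.IsHomogeneous (k * p - 1))
    (a b : Fin n → ZMod p) (hb : b ≠ 0)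
    (hline : ∀ t : ZMod p, HasseVanish f (a + t • b) m) :
    HasseVanish f b k :=
  hasse_vanish_on_line_implies_at_direction_general hm f hf a b hline
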